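/- Let u ⊆ Q induce a connected subgraph of G, let a*, b* ∈ u be distinct, and define W_{a*} = {x ∈ u : d_u(x, a*) ≤ d_u(x, b*)} and W_{b*} = {x ∈ u : d_u(x, b*) < d_u(x, a*)}. Then both W_{a*} and W_{b*} induce connected subgraphs of G. -/

import Mathlib

open scoped ENNReal symmDiff

/-- Weight of a path (list of vertices): sum of edge weights of consecutive pairs. -/
noncomputable def pathWeight {V : Type*} (w : V → V → ℝ≥0∞) : List V → ℝ≥0∞
  | [] => 0
  | [_] => 0
  | a :: b :: l => w a b + pathWeight w (b :: l)
termination_by l => l.length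

/-- `l` is a walk from `x` to `y` inside the induced subgraph `G ∩ S`. -/
def IsWalkIn {V : Type*} (G : SimpleGraph V) (S : Set V) (x y : V) (l : List V) : Prop :=
  l.Chain' G.Adj ∧ (∀ v ∈ l, v ∈ S) ∧ l.head? = some x ∧ l.getLast? = some y

/-- Shortest-path distance between `x` and `y` in the induced subgraph `G ∩ S`
(`⊤` if there is no walk). -/
noncomputable def gdist {V : Type*} (G : SimpleGraph V) (w : V → V → ℝ≥0∞)
    (S : Set V) (x y : V) : ℝ≥0∞ :=
  sInf (pathWeight w '' {l | IsWalkIn G S x y l})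

/-- `S` is a nonempty subset inducing a connected subgraph of `G`. -/
def ConnectedIn {V : Type*} (G : SimpleGraph V) (S : Set V) : Prop :=
  S.Nonempty ∧ ∀ x ∈ S, ∀ y ∈ S, ∃ l, IsWalkIn G S x y l

/-- Two subsets are adjacent if some edge of `G` joins them. -/
def AdjSets {V : Type*} (G : SimpleGraph V) (A B : Set V) : Prop :=
  ∃ a ∈ A, ∃ b ∈ B, G.Adj a b

/-- One-center cost `H₁(h; S) = ∑_{k ∈ S} d_S(h,k) φ(k)`. -/
noncomputable def H1 {V : Type*} [Fintype V] (G : SimpleGraph V) (w : V → V → ℝ≥0∞)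
    (φ : V → ℝ≥0∞) (h : V) (S : Set V) : ℝ≥0∞ :=
  ∑ k : V, S.indicator (fun k => gdist G w S h k * φ k) k

/-- The set of minimizers of `H₁(·; S)` over `S`. -/
def argminH1 {V : Type*} [Fintype V] (G : SimpleGraph V) (w : V → V → ℝ≥0∞)
    (φ : V → ℝ≥0∞) (S : Set V) : Set V :=
  {h ∈ S | ∀ h' ∈ S, H1 G w φ h S ≤ H1 G w φ h' S}

/-- Generalized centroid: least element (total order on `V`) of the argmin of `H₁(·; S)`. -/
noncomputable def Cd {V : Type*} [Fintype V] [LinearOrder V] [Nonempty V]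
    (G : SimpleGraph V) (w : V → V → ℝ≥0∞) (φ : V → ℝ≥0∞) (S : Set V) : V :=
  if hne : ((argminH1 G w φ S).toFinite.toFinset).Nonempty then
    (argminH1 G w φ S).toFinite.toFinset.min' hne
  else Classical.arbitrary V

/-- Connected `N`-partition of the vertex set. -/
def IsConnPart {V : Type*} (G : SimpleGraph V) {N : ℕ} (p : Fin N → Set V) : Prop :=
  (⋃ i, p i) = Set.univ ∧ (∀ i j, i ≠ j → p i ∩ p j = ∅) ∧
    (∀ i, (p i).Nonempty) ∧ (∀ i, ConnectedIn G (p i))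

/-- Multicenter cost `H_multicenter(p, c) = ∑ᵢ H₁(cᵢ; pᵢ)`. -/
noncomputable def Hmc {V : Type*} [Fintype V] (G : SimpleGraph V) (w : V → V → ℝ≥0∞)
    (φ : V → ℝ≥0∞) {N : ℕ} (p : Fin N → Set V) (c : Fin N → V) : ℝ≥0∞ :=
  ∑ i, H1 G w φ (c i) (p i)

/-- `H_exp(p) = ∑ᵢ H₁(Cd(pᵢ); pᵢ)`. -/
noncomputable def Hexp {V : Type*} [Fintype V] [LinearOrder V] [Nonempty V]
    (G : SimpleGraph V) (w : V → V → ℝ≥0∞) (φ : V → ℝ≥0∞) {N : ℕ}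
    (p : Fin N → Set V) : ℝ≥0∞ :=
  ∑ i, H1 G w φ (Cd G w φ (p i)) (p i)

/-- `p` is a Voronoi partition of `Q` generated by `c` (distances `d_G` in the full graph). -/
def IsVoronoi {V : Type*} (G : SimpleGraph V) (w : V → V → ℝ≥0∞) {N : ℕ}
    (p : Fin N → Set V) (c : Fin N → V) : Prop :=
  ∀ i, c i ∈ p i ∧ ∀ k ∈ p i, ∀ j, j ≠ i →
    gdist G w Set.univ k (c i) ≤ gdist G w Set.univ k (c j)

/-- Two-center cost `D(a,b) = ∑_{h ∈ u} min{d_u(h,a), d_u(h,b)}`. -/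
noncomputable def Dtwo {V : Type*} [Fintype V] (G : SimpleGraph V) (w : V → V → ℝ≥0∞)
    (u : Set V) (a b : V) : ℝ≥0∞ :=
  ∑ h : V, u.indicator (fun h => min (gdist G w u h a) (gdist G w u h b)) h

/-- `p` is a pairwise-optimal connected `N`-partition. -/
def PairwiseOptimal {V : Type*} [Fintype V] [LinearOrder V] [Nonempty V]
    (G : SimpleGraph V) (w : V → V → ℝ≥0∞) (φ : V → ℝ≥0∞) {N : ℕ}
    (p : Fin N → Set V) : Prop :=
  IsConnPart G p ∧ ∀ i j : Fin N, i ≠ j → AdjSets G (p i) (p j) →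
    H1 G w φ (Cd G w φ (p i)) (p i) + H1 G w φ (Cd G w φ (p j)) (p j)
      = ⨅ a ∈ p i ∪ p j, ⨅ b ∈ p i ∪ p j, Dtwo G w (p i ∪ p j) a b

/-- `p` is centroidal Voronoi in pairs. -/
def CVIP {V : Type*} [Fintype V] [LinearOrder V] [Nonempty V]
    (G : SimpleGraph V) (w : V → V → ℝ≥0∞) (φ : V → ℝ≥0∞) {N : ℕ}
    (p : Fin N → Set V) : Prop :=
  ∀ i j : Fin N, i ≠ j → AdjSets G (p i) (p j) → ∀ k ∈ p i,
    gdist G w (p i ∪ p j) k (Cd G w φ (p i)) ≤ gdist G w (p i ∪ p j) k (Cd G w φ (p j))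

/-! A geodesic of `u` from a point `x` of a cell to its center stays in the cell: for `v` on a
geodesic from `x` to `a*`, `d(x,v) + d(v,a*) = d(x,a*) ≤ d(x,b*) ≤ d(x,v) + d(v,b*)`, and cancelling
the finite `d(x,v)` gives `d(v,a*) ≤ d(v,b*)`; likewise with `<` for the cell of `b*`. Geodesics
exist because a shortest walk may be taken without repeated vertices, and there are finitely many
such walks. -/

section Walks

variable {V : Type*} {G : SimpleGraph V} {w : V → V → ℝ≥0∞} {S : Set V} {x y z v : V}
  {l : List V}

@[simp] lemma pathWeight_nil : pathWeight w ([] : List V) = 0 := by simp [pathWeight]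

@[simp] lemma pathWeight_singleton (a : V) : pathWeight w [a] = 0 := by simp [pathWeight]

@[simp] lemma pathWeight_cons_cons (a b : V) (l : List V) :
    pathWeight w (a :: b :: l) = w a b + pathWeight w (b :: l) := by
  rw [pathWeight]

lemma pathWeight_append_cons (l₁ : List V) (v : V) (l₂ : List V) :
    pathWeight w (l₁ ++ v :: l₂) = pathWeight w (l₁ ++ [v]) + pathWeight w (v :: l₂) := by
  induction l₁ with
  | nil => simp
  | cons a t ih => cases t <;> simp_all [add_assoc]

lemma pathWeight_ne_top (hw : ∀ a b, G.Adj a b → w a b ≠ ⊤) (hl : l.IsChain G.Adj) :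
    pathWeight w l ≠ ⊤ := by
  induction hl with
  | nil => simp
  | singleton => simp
  | cons_cons hab _ ih => simpa using ⟨hw _ _ hab, ih⟩

lemma isWalkIn_iff : IsWalkIn G S x y l ↔
    l.IsChain G.Adj ∧ (∀ v ∈ l, v ∈ S) ∧ l.head? = some x ∧ l.getLast? = some y :=
  Iff.rfl

namespace IsWalkIn

lemma ne_nil (h : IsWalkIn G S x y l) : l ≠ [] := by
  rintro rfl; simp [isWalkIn_iff] at h

lemma reverse (h : IsWalkIn G S x y l) : IsWalkIn G S y x l.reverse := by
  obtain ⟨hc, hS, hx, hy⟩ := isWalkIn_iff.1 h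
  refine ⟨?_, by simpa using hS, by simpa using hy, by simpa using hx⟩
  exact List.isChain_reverse.2 (hc.imp fun _ _ h => h.symm)

end IsWalkIn

lemma isWalkIn_append_cons_iff {l₁ l₂ : List V} :
    IsWalkIn G S x y (l₁ ++ v :: l₂) ↔
      IsWalkIn G S x v (l₁ ++ [v]) ∧ IsWalkIn G S v y (v :: l₂) := by
  simp only [isWalkIn_iff]
  rw [List.isChain_split]
  cases l₁ <;> simp <;> grind

lemma isWalkIn_cons_cons_iff {a b : V} :
    IsWalkIn G S x y (a :: b :: l) ↔ x = a ∧ G.Adj a b ∧ a ∈ S ∧ IsWalkIn G S b y (b :: l) := by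
  simp only [isWalkIn_iff, List.isChain_cons_cons]
  simp
  grind

lemma IsWalkIn.append {l₁ l₂ : List V} (h₁ : IsWalkIn G S x y l₁) (h₂ : IsWalkIn G S y z l₂) :
    IsWalkIn G S x z (l₁ ++ l₂.tail) := by
  obtain ⟨l₁, rfl⟩ := List.getLast?_eq_some_iff.1 h₁.2.2.2
  obtain ⟨l₂, rfl⟩ := List.head?_eq_some_iff.1 h₂.2.2.1
  simpa using isWalkIn_append_cons_iff.2 ⟨h₁, h₂⟩

lemma gdist_le_pathWeight (h : IsWalkIn G S x y l) : gdist G w S x y ≤ pathWeight w l :=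
  sInf_le ⟨l, h, rfl⟩

lemma gdist_self (hx : x ∈ S) : gdist G w S x x = 0 :=
  nonpos_iff_eq_zero.1 <| by
    simpa using gdist_le_pathWeight (w := w) (show IsWalkIn G S x x [x] by simp [isWalkIn_iff, hx])

lemma gdist_triangle : gdist G w S x z ≤ gdist G w S x y + gdist G w S y z := by
  unfold gdist
  rw [ENNReal.sInf_add]
  refine le_iInf₂ fun _ ⟨l₁, h₁, hl₁⟩ => ?_
  rw [ENNReal.add_sInf]
  refine le_iInf₂ fun _ ⟨l₂, h₂, hl₂⟩ => ?_
  obtain ⟨l₁, rfl⟩ := List.getLast?_eq_some_iff.1 h₁.2.2.2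
  obtain ⟨l₂, rfl⟩ := List.head?_eq_some_iff.1 h₂.2.2.1
  rw [← hl₁, ← hl₂, ← pathWeight_append_cons]
  exact gdist_le_pathWeight (isWalkIn_append_cons_iff.2 ⟨h₁, h₂⟩)

lemma gdist_add_gdist_le_pathWeight (h : IsWalkIn G S x y l) (hv : v ∈ l) :
    gdist G w S x v + gdist G w S v y ≤ pathWeight w l := by
  obtain ⟨l₁, l₂, rfl⟩ := List.append_of_mem hv
  obtain ⟨h₁, h₂⟩ := isWalkIn_append_cons_iff.1 h
  rw [pathWeight_append_cons]
  exact add_le_add (gdist_le_pathWeight h₁) (gdist_le_pathWeight h₂)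

lemma IsWalkIn.exists_nodup_pathWeight_le (h : IsWalkIn G S x y l) :
    ∃ l', IsWalkIn G S x y l' ∧ l'.Nodup ∧ pathWeight w l' ≤ pathWeight w l := by
  induction l generalizing x with
  | nil => exact absurd rfl h.ne_nil
  | cons a t ih =>
    cases t with
    | nil => exact ⟨[a], h, List.nodup_singleton a, le_rfl⟩
    | cons c t =>
      obtain ⟨rfl, hxc, hx, ht⟩ := isWalkIn_cons_cons_iff.1 h
      obtain ⟨l', hl', hnd, hle⟩ := ih ht
      by_cases hxl' : x ∈ l'
      · obtain ⟨l₁, l₂, rfl⟩ := List.append_of_mem hxl'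
        refine ⟨x :: l₂, (isWalkIn_append_cons_iff.1 hl').2,
          hnd.sublist (List.sublist_append_right _ _), ?_⟩
        calc pathWeight w (x :: l₂)
            ≤ pathWeight w (l₁ ++ x :: l₂) := by
              rw [pathWeight_append_cons]; exact le_add_self
          _ ≤ pathWeight w (c :: t) := hle
          _ ≤ pathWeight w (x :: c :: t) := by rw [pathWeight_cons_cons]; exact le_add_self
      · obtain ⟨l'', rfl⟩ := List.head?_eq_some_iff.1 hl'.2.2.1
        refine ⟨x :: c :: l'', isWalkIn_cons_cons_iff.2 ⟨rfl, hxc, hx, hl'⟩,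
          List.nodup_cons.2 ⟨hxl', hnd⟩, ?_⟩
        simp only [pathWeight_cons_cons] at hle ⊢
        gcongr

lemma IsWalkIn.exists_pathWeight_eq_gdist [Finite V] (h : IsWalkIn G S x y l) :
    ∃ l', IsWalkIn G S x y l' ∧ pathWeight w l' = gdist G w S x y := by
  have hfin : {l | IsWalkIn G S x y l ∧ l.Nodup}.Finite := by
    cases nonempty_fintype V
    exact (List.finite_length_le V (Fintype.card V)).subset fun l hl => hl.2.length_le_card
  obtain ⟨l₀, hl₀, hnd₀, -⟩ := h.exists_nodup_pathWeight_le (w := w)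
  obtain ⟨l', ⟨hl', -⟩, hmin⟩ := Set.exists_min_image _ (pathWeight w) hfin ⟨l₀, hl₀, hnd₀⟩
  refine ⟨l', hl', le_antisymm (le_sInf ?_) (gdist_le_pathWeight hl')⟩
  rintro _ ⟨l, hl, rfl⟩
  obtain ⟨l'', hl'', hnd, hle⟩ := hl.exists_nodup_pathWeight_le (w := w)
  exact (hmin l'' ⟨hl'', hnd⟩).trans hle

lemma gdist_pos [Finite V] (hw : ∀ a b, G.Adj a b → 0 < w a b) (hxy : x ≠ y) :
    0 < gdist G w S x y := by
  rcases em (∃ l, IsWalkIn G S x y l) with ⟨l, hl⟩ | hwalk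
  · obtain ⟨l, hl, hmin⟩ := hl.exists_pathWeight_eq_gdist (w := w)
    rcases l with _ | ⟨a, _ | ⟨c, t⟩⟩
    · exact absurd rfl hl.ne_nil
    · obtain ⟨-, -, hx, hy⟩ := hl
      simp only [List.head?_cons, List.getLast?_singleton, Option.some.injEq] at hx hy
      exact absurd (hx ▸ hy) hxy
    · obtain ⟨rfl, hxc, -⟩ := isWalkIn_cons_cons_iff.1 hl
      rw [← hmin, pathWeight_cons_cons]
      exact (hw x c hxc).trans_le le_self_add
  · simp [gdist, not_exists.1 hwalk]

end Walks

section Geodesics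

variable {V : Type*} {G : SimpleGraph V} {w : V → V → ℝ≥0∞} {u : Set V} {x t o v : V}
  {l : List V}

lemma gdist_le_of_mem_geodesic (hw : ∀ a b, G.Adj a b → w a b ≠ ⊤) (hl : IsWalkIn G u x t l)
    (hmin : pathWeight w l = gdist G w u x t) (hv : v ∈ l)
    (h : gdist G w u x t ≤ gdist G w u x o) : gdist G w u v t ≤ gdist G w u v o := by
  have hsplit := gdist_add_gdist_le_pathWeight (w := w) hl hv
  have hxv : gdist G w u x v ≠ ⊤ :=
    ne_top_of_le_ne_top (pathWeight_ne_top hw hl.1) (le_self_add.trans hsplit)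
  refine (ENNReal.add_le_add_iff_left hxv).1 ?_
  calc gdist G w u x v + gdist G w u v t ≤ gdist G w u x t := hmin ▸ hsplit
    _ ≤ gdist G w u x o := h
    _ ≤ gdist G w u x v + gdist G w u v o := gdist_triangle

lemma gdist_lt_of_mem_geodesic (hw : ∀ a b, G.Adj a b → w a b ≠ ⊤) (hl : IsWalkIn G u x t l)
    (hmin : pathWeight w l = gdist G w u x t) (hv : v ∈ l)
    (h : gdist G w u x t < gdist G w u x o) : gdist G w u v t < gdist G w u v o := by
  have hsplit := gdist_add_gdist_le_pathWeight (w := w) hl hv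
  have hxv : gdist G w u x v ≠ ⊤ :=
    ne_top_of_le_ne_top (pathWeight_ne_top hw hl.1) (le_self_add.trans hsplit)
  refine (ENNReal.add_lt_add_iff_left hxv).1 ?_
  calc gdist G w u x v + gdist G w u v t ≤ gdist G w u x t := hmin ▸ hsplit
    _ < gdist G w u x o := h
    _ ≤ gdist G w u x v + gdist G w u v o := gdist_triangle

lemma connectedIn_of_geodesics_subset [Finite V] (hu : ConnectedIn G u) {W : Set V} {c : V}
    (hWu : W ⊆ u) (hc : c ∈ W)
    (hW : ∀ x ∈ W, ∀ l, IsWalkIn G u x c l → pathWeight w l = gdist G w u x c → ∀ v ∈ l, v ∈ W) :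
    ConnectedIn G W := by
  have hwalk : ∀ x ∈ W, ∃ l, IsWalkIn G W x c l := by
    intro x hx
    obtain ⟨l₀, hl₀⟩ := hu.2 x (hWu hx) c (hWu hc)
    obtain ⟨l, hl, hmin⟩ := hl₀.exists_pathWeight_eq_gdist (w := w)
    exact ⟨l, hl.1, hW x hx l hl hmin, hl.2.2⟩
  refine ⟨⟨c, hc⟩, fun x hx y hy => ?_⟩
  obtain ⟨lx, hlx⟩ := hwalk x hx
  obtain ⟨ly, hly⟩ := hwalk y hy
  exact ⟨_, hlx.append hly.reverse⟩

end Geodesics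

variable {V : Type*} [Fintype V] [LinearOrder V] [Nonempty V]

theorem voronoi_cells_connected_general (G : SimpleGraph V) (w : V → V → ℝ≥0∞)
    (hw : ∀ a b, G.Adj a b → 0 < w a b ∧ w a b ≠ ⊤)
    (u : Set V) (hu : ConnectedIn G u) (a b : V) (ha : a ∈ u) (hb : b ∈ u) (hab : a ≠ b) :
    ConnectedIn G {x ∈ u | gdist G w u x a ≤ gdist G w u x b} ∧
    ConnectedIn G {x ∈ u | gdist G w u x b < gdist G w u x a} := by
  have hw_top : ∀ a b, G.Adj a b → w a b ≠ ⊤ := fun a b h => (hw a b h).2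
  constructor
  · have ha' : gdist G w u a a ≤ gdist G w u a b := by simp [gdist_self ha]
    refine connectedIn_of_geodesics_subset (w := w) hu (Set.sep_subset _ _) ⟨ha, ha'⟩ ?_
    rintro x ⟨-, hx⟩ l hl hmin v hv
    exact ⟨hl.2.1 v hv, gdist_le_of_mem_geodesic hw_top hl hmin hv hx⟩
  · have hb' : gdist G w u b b < gdist G w u b a := by
      rw [gdist_self hb]
      exact gdist_pos (fun a b h => (hw a b h).1) hab.symm
    refine connectedIn_of_geodesics_subset (w := w) hu (Set.sep_subset _ _) ⟨hb, hb'⟩ ?_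
    rintro x ⟨-, hx⟩ l hl hmin v hv
    exact ⟨hl.2.1 v hv, gdist_lt_of_mem_geodesic hw_top hl hmin hv hx⟩

theorem voronoi_cells_connected (G : SimpleGraph V) (w : V → V → ℝ≥0∞)
    (hw : ∀ a b, G.Adj a b → 0 < w a b ∧ w a b ≠ ⊤) (hwsymm : ∀ a b, w a b = w b a)
    (u : Set V) (hu : ConnectedIn G u) (a b : V) (ha : a ∈ u) (hb : b ∈ u) (hab : a ≠ b) :
    ConnectedIn G {x ∈ u | gdist G w u x a ≤ gdist G w u x b} ∧
    ConnectedIn G {x ∈ u | gdist G w u x b < gdist G w u x a} :=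
  voronoi_cells_connected_general G w hw u hu a b ha hb hab
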